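/- Let (A[[ν]],⋆) and (A'[[ν]],⋆') be formal deformations of associative unital R-algebras A and A', and let F : A[[ν]] → A'[[ν]] be a morphism of unital R[[ν]]-algebras from (A[[ν]],⋆) to (A'[[ν]],⋆'). Write F(a) = F0(a) + νF1(a) + ν²F2(a) + ⋯ for a ∈ A, defining R-linear maps F_i : A → A'. If F0(Z(A)) ⊆ Z(A'), then F(H_ν) ⊆ H'_ν, and F0 restricted to centers is a morphism of reduced Poisson algebras: for all a, b ∈ Z(A), F0({a,b}_1) = {F0(a), F0(b)}'_1, where {·,·}'_1 is the first-order bracket of ⋆'. -/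

import Mathlib

open PowerSeries

/-- A formal deformation `(A⟦ν⟧, ⋆)` of an associative unital `R`-algebra `A`:
an `R⟦ν⟧`-bilinear, associative, unital (with unit the constant series `1`)
multiplication `⋆` on the `R⟦ν⟧`-module `A⟦ν⟧`, such that `a ⋆ b ≡ a * b (mod ν·A⟦ν⟧)`
for all `a, b : A` (viewed as constant power series).  The `R⟦ν⟧`-module structure on
`A⟦ν⟧` is given by `c • P = (map (algebraMap R A) c) * P`. -/
structure FormalDeformation (R A : Type*) [CommRing R] [Ring A] [Algebra R A] where
  star : PowerSeries A → PowerSeries A → PowerSeries A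
  add_star : ∀ P Q S, star (P + Q) S = star P S + star Q S
  star_add : ∀ P Q S, star P (Q + S) = star P Q + star P S
  smul_star : ∀ (c : PowerSeries R) (P Q : PowerSeries A),
      star (PowerSeries.map (algebraMap R A) c * P) Q
        = PowerSeries.map (algebraMap R A) c * star P Q
  star_smul : ∀ (c : PowerSeries R) (P Q : PowerSeries A),
      star P (PowerSeries.map (algebraMap R A) c * Q)
        = PowerSeries.map (algebraMap R A) c * star P Q
  star_assoc : ∀ P Q S, star (star P Q) S = star P (star Q S)
  one_star : ∀ P, star 1 P = P
  star_one : ∀ P, star P 1 = P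
  star_deform : ∀ a b : A,
      constantCoeff (R := A) (star (C (R := A) a) (C (R := A) b)) = a * b

namespace FormalDeformation

variable {R A : Type*} [CommRing R] [Ring A] [Algebra R A]

/-- `(a,b)ᵢ` : the coefficient of `νⁱ` in `a ⋆ b`, for `a b : A`. -/
noncomputable def prodCoeff (D : FormalDeformation R A) (i : ℕ) (a b : A) : A :=
  coeff (R := A) i (D.star (C (R := A) a) (C (R := A) b))

/-- `{a,b}ᵢ` : the coefficient of `νⁱ` in `a ⋆ b − b ⋆ a`, for `a b : A`. -/
noncomputable def brkt (D : FormalDeformation R A) (i : ℕ) (a b : A) : A :=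
  coeff (R := A) i (D.star (C (R := A) a) (C (R := A) b) - D.star (C (R := A) b) (C (R := A) a))

end FormalDeformation

/-- `H_ν = Z(A) + ν·A⟦ν⟧` : the power series whose constant term is central in `A`. -/
def Hnu (A : Type*) [Ring A] : Set (PowerSeries A) :=
  {P | constantCoeff (R := A) P ∈ Set.center A}

/-! Because `F` is additive and commutes with multiplication by `ν`, the first two coefficients
of `F P` are `F₀(P₀)` and `F₁(P₀) + F₀(P₁)`. The first formula gives `F(H_ν) ⊆ H'_ν`. For central
`a, b` the series `a ⋆ b − b ⋆ a` has constant term `0` and `ν`-coefficient `{a,b}₁`, so the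
`ν`-coefficient of its image is `F₀({a,b}₁)`. Computed instead from
`F a ⋆' F b − F b ⋆' F a`, the same coefficient is `{F₀ a, F₀ b}'₁`: the cross terms
`F₀(a) F₁(b) − F₁(b) F₀(a)` and `F₁(a) F₀(b) − F₀(b) F₁(a)` vanish since `F₀ a, F₀ b` are central. -/

namespace FormalDeformation

variable {R A : Type*} [CommRing R] [Ring A] [Algebra R A] (D : FormalDeformation R A)

theorem X_mul_star (P Q : PowerSeries A) : D.star (X * P) Q = X * D.star P Q := by
  simpa only [map_X] using D.smul_star X P Q

theorem star_X_mul (P Q : PowerSeries A) : D.star P (X * Q) = X * D.star P Q := by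
  simpa only [map_X] using D.star_smul X P Q

theorem C_add_X_mul_star_C_add_X_mul (a b : A) (P Q : PowerSeries A) :
    D.star (C a + X * P) (C b + X * Q) = D.star (C a) (C b)
      + X * (D.star (C a) Q + D.star P (C b)) + X * X * D.star P Q := by
  simp only [D.add_star, D.star_add, D.X_mul_star, D.star_X_mul, mul_assoc, mul_add]
  abel

theorem constantCoeff_star (P Q : PowerSeries A) :
    constantCoeff (D.star P Q) = constantCoeff P * constantCoeff Q := by
  conv_lhs => rw [eq_X_mul_shift_add_const P, eq_X_mul_shift_add_const Q, add_comm (X * _),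
    add_comm (X * _), C_add_X_mul_star_C_add_X_mul]
  simp [D.star_deform]

theorem coeff_one_star (P Q : PowerSeries A) :
    coeff 1 (D.star P Q) = D.prodCoeff 1 (constantCoeff P) (constantCoeff Q)
      + constantCoeff P * coeff 1 Q + coeff 1 P * constantCoeff Q := by
  conv_lhs => rw [eq_X_mul_shift_add_const P, eq_X_mul_shift_add_const Q, add_comm (X * _),
    add_comm (X * _), C_add_X_mul_star_C_add_X_mul]
  simp [prodCoeff, D.constantCoeff_star, mul_assoc, coeff_succ_X_mul]
  abel

theorem brkt_eq_prodCoeff_sub (i : ℕ) (a b : A) :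
    D.brkt i a b = D.prodCoeff i a b - D.prodCoeff i b a :=
  map_sub _ _ _

theorem constantCoeff_star_sub_star {P Q : PowerSeries A} (hP : constantCoeff P ∈ Set.center A) :
    constantCoeff (D.star P Q - D.star Q P) = 0 := by
  rw [map_sub, D.constantCoeff_star, D.constantCoeff_star, (Set.mem_center_iff.mp hP).comm,
    sub_self]

theorem coeff_one_star_sub_star {P Q : PowerSeries A} (hP : constantCoeff P ∈ Set.center A)
    (hQ : constantCoeff Q ∈ Set.center A) :
    coeff 1 (D.star P Q - D.star Q P) = D.brkt 1 (constantCoeff P) (constantCoeff Q) := by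
  rw [map_sub, D.coeff_one_star, D.coeff_one_star, D.brkt_eq_prodCoeff_sub,
    (Set.mem_center_iff.mp hP).comm, (Set.mem_center_iff.mp hQ).comm]
  abel

end FormalDeformation

namespace AddMonoidHom

variable {A A' : Type*} [Ring A] [Ring A'] (F : PowerSeries A →+ PowerSeries A')

theorem apply_eq_apply_C_add_X_mul (hF : ∀ P, F (X * P) = X * F P) (P : PowerSeries A) :
    F P = F (C (constantCoeff P)) + X * F (PowerSeries.mk fun n ↦ coeff (n + 1) P) := by
  conv_lhs => rw [eq_X_mul_shift_add_const P]
  rw [map_add, hF, add_comm]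

theorem constantCoeff_apply (hF : ∀ P, F (X * P) = X * F P) (P : PowerSeries A) :
    constantCoeff (F P) = constantCoeff (F (C (constantCoeff P))) := by
  rw [F.apply_eq_apply_C_add_X_mul hF]
  simp

theorem coeff_one_apply (hF : ∀ P, F (X * P) = X * F P) (P : PowerSeries A) :
    coeff 1 (F P) = coeff 1 (F (C (constantCoeff P))) + constantCoeff (F (C (coeff 1 P))) := by
  rw [F.apply_eq_apply_C_add_X_mul hF, map_add, coeff_succ_X_mul,
    coeff_zero_eq_constantCoeff_apply, F.constantCoeff_apply hF (PowerSeries.mk _)]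
  simp

end AddMonoidHom

theorem morphism_reduced_poisson_general {R A A' : Type*} [CommRing R] [Ring A] [Algebra R A]
    [Ring A'] [Algebra R A'] (D : FormalDeformation R A) (D' : FormalDeformation R A')
    (F : PowerSeries A → PowerSeries A')
    (hadd : ∀ P Q, F (P + Q) = F P + F Q)
    (hmul : ∀ P Q, F (D.star P Q) = D'.star (F P) (F Q))
    (hlin : ∀ (c : PowerSeries R) (P : PowerSeries A),
      F (PowerSeries.map (algebraMap R A) c * P)
        = PowerSeries.map (algebraMap R A') c * F P)
    (hF0 : ∀ a : A, a ∈ Set.center A → coeff (R := A') 0 (F (C (R := A) a)) ∈ Set.center A') :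
    (∀ P : PowerSeries A, P ∈ Hnu A → F P ∈ Hnu A') ∧
    (∀ a b : A, a ∈ Set.center A → b ∈ Set.center A →
      coeff (R := A') 0 (F (C (R := A) (D.brkt 1 a b)))
        = D'.brkt 1 (coeff (R := A') 0 (F (C (R := A) a))) (coeff (R := A') 0 (F (C (R := A) b)))) := by
  simp only [coeff_zero_eq_constantCoeff_apply] at hF0 ⊢
  let f : PowerSeries A →+ PowerSeries A' := AddMonoidHom.mk' F hadd
  have hX (P : PowerSeries A) : F (X * P) = X * F P := by simpa only [map_X] using hlin X P
  refine ⟨fun P hP ↦ ?_, fun a b ha hb ↦ ?_⟩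
  · rw [Hnu, Set.mem_ofPred_eq] at hP ⊢
    rw [show F P = f P from rfl, f.constantCoeff_apply hX]
    exact hF0 _ hP
  · have hcentral : constantCoeff (D.star (C a) (C b) - D.star (C b) (C a)) = 0 :=
      D.constantCoeff_star_sub_star (by rwa [constantCoeff_C])
    have hbrkt := f.coeff_one_apply hX (D.star (C a) (C b) - D.star (C b) (C a))
    rw [hcentral, map_zero, map_zero, map_zero, zero_add, map_sub] at hbrkt
    change coeff 1 (F _ - F _) = constantCoeff (F (C (D.brkt 1 a b))) at hbrkt
    rw [hmul, hmul, D'.coeff_one_star_sub_star (hF0 a ha) (hF0 b hb)] at hbrkt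
    exact hbrkt.symm

/-- if `F : (A⟦ν⟧,⋆) → (A'⟦ν⟧,⋆')` is a morphism of unital `R⟦ν⟧`-algebras
between two formal deformations and `F₀(Z(A)) ⊆ Z(A')` (where `Fᵢ(a)` is the coefficient of
`νⁱ` in `F(a)` for `a ∈ A`), then `F(H_ν) ⊆ H'_ν` and `F₀` restricted to the centers is a
morphism of reduced Poisson algebras: `F₀({a,b}₁) = {F₀(a), F₀(b)}'₁` for `a, b ∈ Z(A)`. -/
theorem morphism_reduced_poisson {R A A' : Type*} [CommRing R] [Ring A] [Algebra R A]
    [Ring A'] [Algebra R A'] (D : FormalDeformation R A) (D' : FormalDeformation R A')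
    (F : PowerSeries A → PowerSeries A')
    (hadd : ∀ P Q, F (P + Q) = F P + F Q)
    (hmul : ∀ P Q, F (D.star P Q) = D'.star (F P) (F Q))
    (hone : F 1 = 1)
    (hlin : ∀ (c : PowerSeries R) (P : PowerSeries A),
      F (PowerSeries.map (algebraMap R A) c * P)
        = PowerSeries.map (algebraMap R A') c * F P)
    (hF0 : ∀ a : A, a ∈ Set.center A → coeff (R := A') 0 (F (C (R := A) a)) ∈ Set.center A') :
    (∀ P : PowerSeries A, P ∈ Hnu A → F P ∈ Hnu A') ∧
    (∀ a b : A, a ∈ Set.center A → b ∈ Set.center A →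
      coeff (R := A') 0 (F (C (R := A) (D.brkt 1 a b)))
        = D'.brkt 1 (coeff (R := A') 0 (F (C (R := A) a))) (coeff (R := A') 0 (F (C (R := A) b)))) :=
  morphism_reduced_poisson_general D D' F hadd hmul hlin hF0
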